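/- For \hat{G} \in G(G,p) with Laplacian L, the expected second-smallest eigenvalue of L^2 satisfies E[\lambda_2(L^2)] \leq (1/(n-1)) (4mp - 2mp^2 + p^2 \sum_{i=1}^n d_i^2). -/

import Mathlib

open MeasureTheory ProbabilityTheory Finset SimpleGraph
attribute [local instance] Classical.propDecidable

/-- The eigenvalues of a real symmetric matrix, sorted in increasing order. -/
noncomputable def sortedEigs {n : ℕ} (A : Matrix (Fin n) (Fin n) ℝ) : List ℝ :=
  if hA : A.IsHermitian then
    Multiset.sort (Multiset.ofList (List.ofFn hA.eigenvalues)) (· ≤ ·)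
  else []

/-- `eig A i` is the `i`-th smallest eigenvalue `λ_i(A)` (1-indexed). -/
noncomputable def eig {n : ℕ} (A : Matrix (Fin n) (Fin n) ℝ) (i : ℕ) : ℝ :=
  (sortedEigs A).getD (i - 1) 0

/-!
The matrix `L²` is positive semidefinite, so its sorted eigenvalues satisfy `0 ≤ λ₁ ≤ λ₂ ≤ ⋯ ≤ λₙ`
and hence `(n - 1) λ₂(L²) ≤ tr L²`. Since `tr L² = ∑ᵢ (dᵢ(Ĝ)² + dᵢ(Ĝ))`, it remains to take
expectations: `dᵢ(Ĝ)` is a sum of `dᵢ` pairwise independent Bernoulli(`p`) indicators, with mean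
`dᵢ p` and second moment `(dᵢ p)² + dᵢ p (1 - p)`. Summing over `i` and using `∑ᵢ dᵢ = 2m` gives
`E[tr L²] = 4mp - 2mp² + p² ∑ᵢ dᵢ²`.
-/

lemma List.Pairwise.length_pred_nsmul_getD_one_le_sum {M : Type*} [AddCommMonoid M]
    [PartialOrder M] [IsOrderedAddMonoid M] {l : List M} (hl : l.Pairwise (· ≤ ·))
    (h0 : ∀ x ∈ l, 0 ≤ x) : (l.length - 1) • l.getD 1 0 ≤ l.sum := by
  match l, hl, h0 with
  | [], _, _ => simp
  | [a], _, h0 => simpa using h0 a (by simp)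
  | a :: b :: t, hl, h0 =>
    have hbt : t.length • b ≤ t.sum :=
      List.card_nsmul_le_sum _ _ (List.pairwise_cons.1 (List.pairwise_cons.1 hl).2).1
    calc (t.length + 1) • b = b + t.length • b := by rw [succ_nsmul']
      _ ≤ a + (b + t.sum) := le_add_of_nonneg_of_le (h0 a (by simp)) (add_le_add le_rfl hbt)
      _ = (a :: b :: t).sum := by simp

section SortedEigenvalues

variable {n : ℕ} {A : Matrix (Fin n) (Fin n) ℝ}

lemma coe_sortedEigs (hA : A.IsHermitian) :
    (sortedEigs A : Multiset ℝ) = List.ofFn hA.eigenvalues := by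
  rw [sortedEigs, dif_pos hA, Multiset.sort_eq]

lemma pairwise_sortedEigs (A : Matrix (Fin n) (Fin n) ℝ) : (sortedEigs A).Pairwise (· ≤ ·) := by
  unfold sortedEigs
  split_ifs
  · exact Multiset.pairwise_sort _ _
  · exact List.Pairwise.nil

lemma length_sortedEigs (hA : A.IsHermitian) : (sortedEigs A).length = n := by
  rw [← Multiset.coe_card, coe_sortedEigs hA]
  simp

lemma sum_sortedEigs (hA : A.IsHermitian) : (sortedEigs A).sum = A.trace := by
  rw [← Multiset.sum_coe, coe_sortedEigs hA, Multiset.sum_coe, List.sum_ofFn,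
    hA.trace_eq_sum_eigenvalues]
  rfl

lemma nonneg_of_mem_sortedEigs (hA : A.PosSemidef) {x : ℝ} (hx : x ∈ sortedEigs A) : 0 ≤ x := by
  rw [← Multiset.mem_coe, coe_sortedEigs hA.isHermitian, Multiset.mem_coe, List.mem_ofFn] at hx
  obtain ⟨i, rfl⟩ := hx
  exact hA.eigenvalues_nonneg i

lemma eig_two_le_trace_div (hn : 2 ≤ n) (hA : A.PosSemidef) : eig A 2 ≤ A.trace / (n - 1) := by
  have hkey := (pairwise_sortedEigs A).length_pred_nsmul_getD_one_le_sum
    fun _ => nonneg_of_mem_sortedEigs hA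
  rw [length_sortedEigs hA.isHermitian, sum_sortedEigs hA.isHermitian, nsmul_eq_mul,
    Nat.cast_pred (by omega)] at hkey
  rw [le_div_iff₀ (by rw [sub_pos]; exact_mod_cast hn), mul_comm]
  exact hkey

end SortedEigenvalues

theorem SimpleGraph.trace_lapMatrix_mul_self {V R : Type*} [Fintype V] [DecidableEq V]
    [CommRing R] (K : SimpleGraph V) [DecidableRel K.Adj] :
    (K.lapMatrix R * K.lapMatrix R).trace = ∑ v, ((K.degree v : R) ^ 2 + K.degree v) := by
  have hDA : (K.degMatrix R * K.adjMatrix R).trace = 0 := by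
    simp only [degMatrix, Matrix.trace, Matrix.diag_apply, Matrix.diagonal_mul, adjMatrix_apply,
      K.irrefl, if_false, mul_zero, Finset.sum_const_zero]
  have hAD : (K.adjMatrix R * K.degMatrix R).trace = 0 := by
    rw [Matrix.trace_mul_comm, hDA]
  have hDD : (K.degMatrix R * K.degMatrix R).trace = ∑ v, (K.degree v : R) ^ 2 := by
    simp [degMatrix, Matrix.trace, sq]
  have hAA : (K.adjMatrix R * K.adjMatrix R).trace = ∑ v, (K.degree v : R) := by
    simp only [Matrix.trace, Matrix.diag_apply, adjMatrix_mul_self_apply_self]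
  rw [lapMatrix, sub_mul, mul_sub, mul_sub, Matrix.trace_sub, Matrix.trace_sub, Matrix.trace_sub,
    hDA, hAD, hDD, hAA, Finset.sum_add_distrib]
  ring

section IndicatorMoments

variable {Ω ι : Type*} [MeasurableSpace Ω] {μ : Measure Ω} [IsFiniteMeasure μ] {A : ι → Set Ω}
  {S : Finset ι} {p : ℝ}

lemma integral_sum_indicator_one (hA : ∀ i ∈ S, MeasurableSet (A i))
    (hp : ∀ i ∈ S, μ.real (A i) = p) :
    ∫ ω, ∑ i ∈ S, (A i).indicator 1 ω ∂μ = #S * p := by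
  rw [integral_finsetSum _ fun i hi => (integrable_const 1).indicator (hA i hi),
    Finset.sum_congr rfl fun i hi => (integral_indicator_one (hA i hi)).trans (hp i hi),
    Finset.sum_const, nsmul_eq_mul]

lemma integral_sq_sum_indicator_one (hA : ∀ i ∈ S, MeasurableSet (A i))
    (hp : ∀ i ∈ S, μ.real (A i) = p)
    (hpair : ∀ i ∈ S, ∀ j ∈ S, i ≠ j → μ.real (A i ∩ A j) = p ^ 2) :
    ∫ ω, (∑ i ∈ S, (A i).indicator 1 ω) ^ 2 ∂μ = (#S * p) ^ 2 + #S * p * (1 - p) := by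
  have hsq : ∀ ω, (∑ i ∈ S, (A i).indicator 1 ω) ^ 2 =
      ∑ i ∈ S, ∑ j ∈ S, (A i ∩ A j).indicator (1 : Ω → ℝ) ω := fun ω => by
    simp only [sq, Finset.sum_mul_sum, Set.inter_indicator_one, Pi.mul_apply]
  have hmeas : ∀ i ∈ S, ∀ j ∈ S, MeasurableSet (A i ∩ A j) :=
    fun i hi j hj => (hA i hi).inter (hA j hj)
  have hrow : ∀ i ∈ S, ∑ j ∈ S, μ.real (A i ∩ A j) = #S * p ^ 2 + (p - p ^ 2) := by
    intro i hi
    rw [← Finset.add_sum_erase S _ hi, Set.inter_self, hp i hi,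
      Finset.sum_congr rfl fun j hj =>
        hpair i hi j (Finset.mem_of_mem_erase hj) (Finset.ne_of_mem_erase hj).symm,
      Finset.sum_const, Finset.card_erase_of_mem hi, nsmul_eq_mul,
      Nat.cast_pred (Finset.card_pos.2 ⟨i, hi⟩)]
    ring
  calc ∫ ω, (∑ i ∈ S, (A i).indicator 1 ω) ^ 2 ∂μ
      = ∫ ω, ∑ i ∈ S, ∑ j ∈ S, (A i ∩ A j).indicator 1 ω ∂μ := by simp_rw [hsq]
    _ = ∑ i ∈ S, ∑ j ∈ S, μ.real (A i ∩ A j) := by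
      rw [integral_finsetSum _ fun i hi => integrable_finsetSum _ fun j hj =>
        (integrable_const 1).indicator (hmeas i hi j hj)]
      refine Finset.sum_congr rfl fun i hi => ?_
      rw [integral_finsetSum _ fun j hj => (integrable_const 1).indicator (hmeas i hi j hj)]
      exact Finset.sum_congr rfl fun j hj => integral_indicator_one (hmeas i hi j hj)
    _ = ∑ _i ∈ S, (#S * p ^ 2 + (p - p ^ 2)) := Finset.sum_congr rfl hrow
    _ = (#S * p) ^ 2 + #S * p * (1 - p) := by
      rw [Finset.sum_const, nsmul_eq_mul]
      ring

end IndicatorMoments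

lemma ProbabilityTheory.iIndepSet.measureReal_inter {Ω ι : Type*} [MeasurableSpace Ω]
    {μ : Measure Ω} {A : ι → Set Ω} (h : iIndepSet A μ) {i j : ι} (hij : i ≠ j) :
    μ.real (A i ∩ A j) = μ.real (A i) * μ.real (A j) := by
  classical
  have := h.meas_biInter {i, j}
  rw [Finset.set_biInter_insert, Finset.set_biInter_singleton,
    Finset.prod_pair hij] at this
  rw [measureReal_def, this, ENNReal.toReal_mul, measureReal_def, measureReal_def]

section RandomSubgraph

variable {Ω V : Type*} [Fintype V] {G : SimpleGraph V} {H : Ω → SimpleGraph V}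

lemma degree_eq_sum_indicator_mem_edgeSet (hsub : ∀ ω, H ω ≤ G) (v : V) (ω : Ω) :
    ((H ω).degree v : ℝ) =
      ∑ w ∈ G.neighborFinset v, {ω | s(v, w) ∈ (H ω).edgeSet}.indicator 1 ω := by
  simp only [Set.indicator_apply, Set.mem_ofPred_eq, mem_edgeSet, Pi.one_apply]
  rw [← Finset.sum_filter, Finset.sum_const, nsmul_one, ← card_neighborFinset_eq_degree]
  congr 2
  ext w
  simp only [mem_neighborFinset, Finset.mem_filter]
  exact ⟨fun h => ⟨hsub ω h, h⟩, And.right⟩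

variable [MeasurableSpace Ω] [DiscreteMeasurableSpace Ω] {μ : Measure Ω} [IsFiniteMeasure μ]
  {p : ℝ} (hsub : ∀ ω, H ω ≤ G)
  (hedge : ∀ e ∈ G.edgeSet, (μ {ω | e ∈ (H ω).edgeSet}).toReal = p)
include hsub hedge

lemma integral_degree (v : V) : ∫ ω, ((H ω).degree v : ℝ) ∂μ = G.degree v * p := by
  simp_rw [degree_eq_sum_indicator_mem_edgeSet hsub v]
  rw [integral_sum_indicator_one (fun _ _ => .of_discrete)
      fun w hw => hedge _ (G.mem_edgeSet.2 ((G.mem_neighborFinset _ _).1 hw)),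
    card_neighborFinset_eq_degree]

lemma integral_degree_sq
    (hind : iIndepSet (fun e : G.edgeSet => {ω | (e : Sym2 V) ∈ (H ω).edgeSet}) μ) (v : V) :
    ∫ ω, ((H ω).degree v : ℝ) ^ 2 ∂μ = (G.degree v * p) ^ 2 + G.degree v * p * (1 - p) := by
  simp_rw [degree_eq_sum_indicator_mem_edgeSet hsub v]
  rw [← card_neighborFinset_eq_degree]
  refine integral_sq_sum_indicator_one (fun _ _ => .of_discrete)
    (fun w hw => hedge _ (G.mem_edgeSet.2 ((G.mem_neighborFinset _ _).1 hw)))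
    fun w hw w' hw' hne => ?_
  have he : s(v, w) ∈ G.edgeSet := G.mem_edgeSet.2 ((G.mem_neighborFinset _ _).1 hw)
  have he' : s(v, w') ∈ G.edgeSet := G.mem_edgeSet.2 ((G.mem_neighborFinset _ _).1 hw')
  have hne' : (⟨s(v, w), he⟩ : G.edgeSet) ≠ ⟨s(v, w'), he'⟩ :=
    fun h => hne (Sym2.congr_right.1 (congrArg Subtype.val h))
  rw [hind.measureReal_inter hne', sq]
  exact congr_arg₂ (· * ·) (hedge _ he) (hedge _ he')

lemma integral_trace_lapMatrix_mul_self [DecidableEq V] [Finite Ω]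
    (hind : iIndepSet (fun e : G.edgeSet => {ω | (e : Sym2 V) ∈ (H ω).edgeSet}) μ) :
    ∫ ω, ((H ω).lapMatrix ℝ * (H ω).lapMatrix ℝ).trace ∂μ =
      4 * #G.edgeFinset * p - 2 * #G.edgeFinset * p ^ 2 + p ^ 2 * ∑ v, (G.degree v : ℝ) ^ 2 := by
  have hdeg : ∑ v, (G.degree v : ℝ) = 2 * #G.edgeFinset := by
    exact_mod_cast G.sum_degrees_eq_twice_card_edges
  simp_rw [trace_lapMatrix_mul_self]
  rw [integral_finsetSum _ fun _ _ => .of_finite]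
  simp_rw [integral_add .of_finite .of_finite, integral_degree_sq hsub hedge hind,
    integral_degree hsub hedge]
  simp only [Finset.sum_add_distrib, ← Finset.sum_mul, mul_pow, hdeg]
  ring

end RandomSubgraph

theorem expected_lambda2_lap_sq_upper_general {Ω : Type*} [Fintype Ω] [MeasurableSpace Ω]
    [MeasurableSingletonClass Ω] (μ : Measure Ω) [IsProbabilityMeasure μ]
    {n : ℕ} (hn : 2 ≤ n) (G : SimpleGraph (Fin n))
    (p : ℝ)
    (H : Ω → SimpleGraph (Fin n)) (hsub : ∀ ω, H ω ≤ G)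
    (hedge : ∀ e ∈ G.edgeSet, (μ {ω | e ∈ (H ω).edgeSet}).toReal = p)
    (hind : iIndepSet (fun e : G.edgeSet => {ω | (e : Sym2 (Fin n)) ∈ (H ω).edgeSet}) μ) :
    (∫ ω, eig ((H ω).lapMatrix ℝ * (H ω).lapMatrix ℝ) 2 ∂μ)
      ≤ (1 / ((n : ℝ) - 1)) *
        (4 * (G.edgeFinset.card : ℝ) * p - 2 * (G.edgeFinset.card : ℝ) * p ^ 2
          + p ^ 2 * ∑ i, (G.degree i : ℝ) ^ 2) := by
  have hpsd : ∀ ω, ((H ω).lapMatrix ℝ * (H ω).lapMatrix ℝ).PosSemidef := fun ω => by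
    simpa only [sq] using (posSemidef_lapMatrix ℝ (H ω)).pow 2
  calc ∫ ω, eig ((H ω).lapMatrix ℝ * (H ω).lapMatrix ℝ) 2 ∂μ
      ≤ ∫ ω, ((H ω).lapMatrix ℝ * (H ω).lapMatrix ℝ).trace / ((n : ℝ) - 1) ∂μ :=
        integral_mono .of_finite .of_finite fun ω => eig_two_le_trace_div hn (hpsd ω)
    _ = _ := by
      rw [integral_div, integral_trace_lapMatrix_mul_self hsub hedge hind, div_eq_mul_one_div,
        mul_comm]

/-- For a random subgraph `H ω` of a connected graph `G` with Laplacian `L`, the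
expected second-smallest eigenvalue of `L²` satisfies
`E[λ₂(L²)] ≤ (4mp - 2mp² + p² ∑ᵢ dᵢ²)/(n-1)`. -/
theorem expected_lambda2_lap_sq_upper {Ω : Type*} [Fintype Ω] [MeasurableSpace Ω]
    [MeasurableSingletonClass Ω] (μ : Measure Ω) [IsProbabilityMeasure μ]
    {n : ℕ} (hn : 2 ≤ n) (G : SimpleGraph (Fin n)) (hG : G.Connected)
    (p : ℝ) (hp0 : 0 < p) (hp1 : p < 1)
    (H : Ω → SimpleGraph (Fin n)) (hsub : ∀ ω, H ω ≤ G)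
    (hedge : ∀ e ∈ G.edgeSet, (μ {ω | e ∈ (H ω).edgeSet}).toReal = p)
    (hind : iIndepSet (fun e : G.edgeSet => {ω | (e : Sym2 (Fin n)) ∈ (H ω).edgeSet}) μ) :
    (∫ ω, eig ((H ω).lapMatrix ℝ * (H ω).lapMatrix ℝ) 2 ∂μ)
      ≤ (1 / ((n : ℝ) - 1)) *
        (4 * (G.edgeFinset.card : ℝ) * p - 2 * (G.edgeFinset.card : ℝ) * p ^ 2
          + p ^ 2 * ∑ i, (G.degree i : ℝ) ^ 2) :=
  expected_lambda2_lap_sq_upper_general μ hn G p H hsub hedge hind
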